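/- Any quasi-inverse of a mapping of bounded distortion for triangles is itself a mapping of bounded distortion for triangles: let (T,d) be a metric space, let ω : T → T be a mapping of bounded distortion for triangles with constants D₁ ≥ 1 and D₂ ≥ 0, and let ω' : T → T be a quasi-inverse of ω with constant D₃ ≥ 0. Then ω' is a mapping of bounded distortion for triangles with constants D₁ and D₁(D₂ + 3D₃); that is, for all x, y, z ∈ T, (1/D₁)⟨x,y⟩_z − D₁(D₂ + 3D₃) ≤ ⟨ω'(x), ω'(y)⟩_{ω'(z)} ≤ D₁⟨x,y⟩_z + D₁(D₂ + 3D₃). -/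

import Mathlib

/-! Apply the distortion bound of `ω` to the triangle `ω' x, ω' y, ω' z`: this compares
`⟨ω' x, ω' y⟩_{ω' z}` with `⟨ωω' x, ωω' y⟩_{ωω' z}`, and since `ω ∘ ω'` moves each point by at
most `D₃`, the latter differs from `⟨x, y⟩_z` by at most `3 D₃`. Solving the affine bounds for the
former costs at most a factor `D₁` in the additive constant. -/

/-- The Gromov product `⟨y,z⟩ₓ = (d(x,y) + d(x,z) − d(y,z))/2` in a metric space. -/
noncomputable def gromovProduct {T : Type*} [MetricSpace T] (x y z : T) : ℝ :=
  (dist x y + dist x z - dist y z) / 2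

lemma abs_gromovProduct_sub_le {T : Type*} [MetricSpace T] (x y z x' y' z' : T) :
    |gromovProduct x y z - gromovProduct x' y' z'| ≤ dist x x' + dist y y' + dist z z' := by
  unfold gromovProduct
  have hxy := dist_triangle4 x x' y' y
  have hxy' := dist_triangle4 x' x y y'
  have hxz := dist_triangle4 x x' z' z
  have hxz' := dist_triangle4 x' x z z'
  have hyz := dist_triangle4 y y' z' z
  have hyz' := dist_triangle4 y' y z z'
  rw [dist_comm x' x, dist_comm y' y, dist_comm z' z] at *
  rw [abs_le]
  constructor <;> linarith

lemma affine_bounds_of_abs_sub_le {a b g D C ε : ℝ} (hD : 1 ≤ D) (hCε : 0 ≤ C + ε)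
    (hab : (1 / D) * a - C ≤ b ∧ b ≤ D * a + C) (hgb : |g - b| ≤ ε) :
    (1 / D) * g - D * (C + ε) ≤ a ∧ a ≤ D * g + D * (C + ε) := by
  have hD₀ : 0 < D := by linarith
  obtain ⟨hgb₁, hgb₂⟩ := abs_le.mp hgb
  constructor
  · have hDa : g - (C + ε) ≤ D * a := by linarith [hab.2]
    calc (1 / D) * g - D * (C + ε)
        ≤ (1 / D) * g - (1 / D) * (C + ε) := by
          gcongr
          exact (div_le_one_of_le₀ hD hD₀.le).trans hD
      _ = (1 / D) * (g - (C + ε)) := by ring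
      _ ≤ (1 / D) * (D * a) := by gcongr
      _ = a := by field_simp
  · calc a = D * ((1 / D) * a) := by field_simp
      _ ≤ D * (g + (C + ε)) := by gcongr; linarith [hab.1]
      _ = D * g + D * (C + ε) := by ring

/-- Any quasi-inverse of a mapping of bounded distortion for triangles is itself a
mapping of bounded distortion for triangles, with constants `D₁` and `D₁(D₂ + 3D₃)`. -/
theorem quasiInverse_boundedDistortion {T : Type*} [MetricSpace T]
    (ω ω' : T → T) (D₁ D₂ D₃ : ℝ) (hD₁ : 1 ≤ D₁) (hD₂ : 0 ≤ D₂) (hD₃ : 0 ≤ D₃)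
    (hω : ∀ x y z : T,
      (1 / D₁) * gromovProduct z x y - D₂ ≤ gromovProduct (ω z) (ω x) (ω y) ∧
      gromovProduct (ω z) (ω x) (ω y) ≤ D₁ * gromovProduct z x y + D₂)
    (hω' : ∀ x : T, dist x (ω (ω' x)) ≤ D₃ ∧ dist x (ω' (ω x)) ≤ D₃) :
    ∀ x y z : T,
      (1 / D₁) * gromovProduct z x y - D₁ * (D₂ + 3 * D₃)
          ≤ gromovProduct (ω' z) (ω' x) (ω' y) ∧
      gromovProduct (ω' z) (ω' x) (ω' y) ≤ D₁ * gromovProduct z x y + D₁ * (D₂ + 3 * D₃) := by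
  intro x y z
  have hωω' : |gromovProduct z x y - gromovProduct (ω (ω' z)) (ω (ω' x)) (ω (ω' y))|
      ≤ 3 * D₃ := by
    linarith [abs_gromovProduct_sub_le z x y (ω (ω' z)) (ω (ω' x)) (ω (ω' y)),
      (hω' x).1, (hω' y).1, (hω' z).1]
  exact affine_bounds_of_abs_sub_le hD₁ (by positivity) (hω (ω' x) (ω' y) (ω' z)) hωω'
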